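/- arXiv:math/0411067 — 4 statements merged into one kernel-verified Lean document; each statement's English description precedes it below -/
import Mathlib

section
/- Let f : ℂ² → ℂ be an entire function (analytic on all of ℂ²) with f(0,0) = 0. Then there exists a point z in the topological boundary ∂𝔻̄² of the closed unit bidisk with f(z) = 0. -/
/-!
Suppose `f` has no zero on `∂𝔻̄²`, so that `‖f‖ ≥ m > 0` there. For `z` in the closed unit disk,
the slice `f (z, ·)` either vanishes somewhere in the closed disk or, by the minimum modulus
principle, satisfies `‖f (z, ·)‖ ≥ m` on all of it. Both alternatives are closed conditions on `z`
and they exclude each other, so by connectedness the first one, which holds at `z = 0`, also holds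
at `z = 1`: this produces a zero on `{1} × 𝔻̄ ⊆ ∂𝔻̄²`.
-/

def bidisk : Set (ℂ × ℂ) := {z : ℂ × ℂ | ‖z.1‖ ≤ 1 ∧ ‖z.2‖ ≤ 1}

open Metric Set

theorem Complex.le_norm_of_forall_mem_frontier_le_norm {E : Type*} [NormedAddCommGroup E]
    [NormedSpace ℂ E] [Nontrivial E] {g : E → ℂ} {U : Set E} (hU : Bornology.IsBounded U)
    (hd : DiffContOnCl ℂ g U)
    (hg : ∀ z ∈ closure U, g z ≠ 0) {m : ℝ} (hm : ∀ z ∈ frontier U, m ≤ ‖g z‖) {z : E}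
    (hz : z ∈ closure U) : m ≤ ‖g z‖ := by
  rcases le_or_gt m 0 with hm0 | hm0
  · exact hm0.trans (norm_nonneg _)
  have hinv : ‖(g z)⁻¹‖ ≤ m⁻¹ := by
    refine Complex.norm_le_of_forall_mem_frontier_norm_le hU (hd.inv hg) (fun w hw => ?_) hz
    rw [Pi.inv_apply, norm_inv]
    exact inv_anti₀ hm0 (hm w hw)
  rwa [norm_inv, inv_le_inv₀ (norm_pos_iff.2 (hg z hz)) hm0] at hinv

theorem exists_slice_zero_of_isPreconnected {X : Type*} [TopologicalSpace X] [T2Space X]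
    {Z : Set X} (hZc : IsCompact Z) (hZ : IsPreconnected Z) {c : ℂ} {r : ℝ} (hr : 0 < r)
    {f : X × ℂ → ℂ} (hf : Continuous f)
    (hslice : ∀ z ∈ Z, DifferentiableOn ℂ (fun w => f (z, w)) (ball c r))
    (hsphere : ∀ p ∈ Z ×ˢ sphere c r, f p ≠ 0)
    {z₀ : X} {w₀ : ℂ} (hz₀ : z₀ ∈ Z) (hw₀ : w₀ ∈ closedBall c r) (hf₀ : f (z₀, w₀) = 0)
    {z : X} (hz : z ∈ Z) : ∃ w ∈ closedBall c r, f (z, w) = 0 := by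
  obtain ⟨m, hm, hmin⟩ : ∃ m, 0 < m ∧ ∀ p ∈ Z ×ˢ sphere c r, m ≤ ‖f p‖ :=
    (hZc.prod (isCompact_sphere c r)).exists_forall_le' hf.norm.continuousOn
      fun p hp => norm_pos_iff.2 (hsphere p hp)
  set A := Prod.fst '' (Z ×ˢ closedBall c r ∩ f ⁻¹' {0})
  set B := Z ∩ ⋂ w ∈ closedBall c r, {z | m ≤ ‖f (z, w)‖}
  have hA : IsClosed A :=
    (((hZc.prod (isCompact_closedBall c r)).inter_right
      (isClosed_singleton.preimage hf)).image continuous_fst).isClosed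
  have hB : IsClosed B :=
    hZc.isClosed.inter <| isClosed_biInter fun w _ =>
      isClosed_le continuous_const (hf.comp (continuous_id.prodMk continuous_const)).norm
  have hcover : Z ⊆ A ∪ B := by
    intro z hz
    by_cases hzero : ∃ w ∈ closedBall c r, f (z, w) = 0
    · obtain ⟨w, hw, hfw⟩ := hzero
      exact Or.inl ⟨(z, w), ⟨⟨hz, hw⟩, hfw⟩, rfl⟩
    push Not at hzero
    refine Or.inr ⟨hz, mem_iInter₂.2 fun w hw => ?_⟩
    rw [← closure_ball c hr.ne'] at hzero hw
    refine Complex.le_norm_of_forall_mem_frontier_le_norm isBounded_ball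
      ⟨hslice z hz, (hf.comp (continuous_const.prodMk continuous_id)).continuousOn⟩
      hzero (fun w hw => ?_) hw
    rw [frontier_ball c hr.ne'] at hw
    exact hmin (z, w) ⟨hz, hw⟩
  have hdisj : Disjoint A B := by
    rw [Set.disjoint_left]
    rintro _ ⟨⟨z, w⟩, ⟨⟨-, hw⟩, hfw⟩, rfl⟩ ⟨-, hzB⟩
    have hmw : m ≤ ‖f (z, w)‖ := mem_iInter₂.1 hzB w hw
    rw [show f (z, w) = 0 from hfw, norm_zero] at hmw
    exact hm.not_ge hmw
  by_contra hnot
  have hzB : z ∈ B := by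
    refine (hcover hz).resolve_left ?_
    rintro ⟨⟨z', w⟩, ⟨⟨-, hw⟩, hfw⟩, rfl⟩
    exact hnot ⟨w, hw, hfw⟩
  obtain ⟨y, -, hyA, hyB⟩ := isPreconnected_closed_iff.1 hZ A B hA hB hcover
    ⟨z₀, hz₀, ⟨(z₀, w₀), ⟨⟨hz₀, hw₀⟩, hf₀⟩, rfl⟩⟩ ⟨z, hz, hzB⟩
  exact hdisj.le_bot ⟨hyA, hyB⟩

theorem bidisk_eq_closedBall_prod : bidisk = closedBall (0 : ℂ) 1 ×ˢ closedBall (0 : ℂ) 1 := by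
  ext p
  simp [bidisk]

theorem sphere_prod_closedBall_subset_frontier_bidisk :
    sphere (0 : ℂ) 1 ×ˢ closedBall (0 : ℂ) 1 ⊆ frontier bidisk := by
  rw [bidisk_eq_closedBall_prod, frontier_prod_eq, closure_closedBall,
    frontier_closedBall _ one_ne_zero]
  exact subset_union_right

theorem closedBall_prod_sphere_subset_frontier_bidisk :
    closedBall (0 : ℂ) 1 ×ˢ sphere (0 : ℂ) 1 ⊆ frontier bidisk := by
  rw [bidisk_eq_closedBall_prod, frontier_prod_eq, closure_closedBall,
    frontier_closedBall _ one_ne_zero]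
  exact subset_union_left

/-- Let `f : ℂ² → ℂ` be an entire function with `f (0,0) = 0`. Then there exists a point
`z` in the topological boundary of the closed unit bidisk with `f z = 0`. -/
theorem stmt5 (f : ℂ × ℂ → ℂ) (hf : ∀ z : ℂ × ℂ, AnalyticAt ℂ f z)
    (h0 : f ((0 : ℂ), (0 : ℂ)) = 0) :
    ∃ z ∈ frontier bidisk, f z = 0 := by
  by_contra! hne
  have hcont : Continuous f := continuous_iff_continuousAt.2 fun p => (hf p).continuousAt
  have hslice (z : ℂ) : Differentiable ℂ fun w => f (z, w) := fun w =>
    (hf (z, w)).differentiableAt.comp w (differentiableAt_const z |>.prodMk differentiableAt_id)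
  obtain ⟨w, hw, hfw⟩ := exists_slice_zero_of_isPreconnected (isCompact_closedBall 0 1)
    (convex_closedBall 0 1).isPreconnected one_pos hcont (fun z _ => (hslice z).differentiableOn)
    (fun p hp => hne p (closedBall_prod_sphere_subset_frontier_bidisk hp))
    (mem_closedBall_self zero_le_one) (mem_closedBall_self zero_le_one) h0
    (z := 1) (by simp)
  exact hne (1, w) (sphere_prod_closedBall_subset_frontier_bidisk ⟨by simp, hw⟩) hfw
end

section
/- Let (V_j) be a sequence of nonempty compact subsets of 𝔻̄² such that for every j and every polynomial function p in the two complex coordinates, sup_{z ∈ V_j} |p(z)| = sup_{z ∈ V_j ∩ ∂𝔻̄²} |p(z)| (in particular each V_j meets ∂𝔻̄²). Suppose V_j converges in the Hausdorff metric to a compact set V with V ∩ ∂𝔻̄² nonempty. Then for every polynomial function p in the two coordinates, sup_{z ∈ V} |p(z)| = sup_{z ∈ V ∩ ∂𝔻̄²} |p(z)|; consequently the polynomial hull of V ∩ ∂𝔻̄² equals the polynomial hull of V. -/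
noncomputable def pev (q : MvPolynomial (Fin 2) ℂ) (z : ℂ × ℂ) : ℂ :=
  MvPolynomial.eval ![z.1, z.2] q

def polyHull (Y : Set (ℂ × ℂ)) : Set (ℂ × ℂ) :=
  {z : ℂ × ℂ | ∀ (q : MvPolynomial (Fin 2) ℂ) (M : ℝ),
    (∀ y ∈ Y, ‖pev q y‖ ≤ M) → ‖pev q z‖ ≤ M}

/-!
For a polynomial `q`, pick points `x j ∈ V j ∩ ∂𝔻̄²` at which `|q|` is maximal on `V j`. A
subsequence converges to some `a`, which lies in `∂𝔻̄²` (a closed set) and in `W` (the Hausdorff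
limit). Every `w ∈ W` is a limit of points `v j ∈ V j`, and `|q (v j)| ≤ |q (x j)|` passes to the
limit, so `|q|` attains its maximum on `W` at `a ∈ W ∩ ∂𝔻̄²`. Equality of the polynomial hulls is
then immediate.
-/

open Filter Topology Metric Set

theorem IsMaxOn.csSup_image_eq {α β : Type*} [ConditionallyCompleteLattice β] {f : α → β}
    {s : Set α} {x : α} (hx : x ∈ s) (h : IsMaxOn f s x) : sSup (f '' s) = f x :=
  IsGreatest.csSup_eq ⟨mem_image_of_mem f hx, forall_mem_image.2 (isMaxOn_iff.1 h)⟩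

theorem IsCompact.exists_isMaxOn_of_csSup_image_eq {X : Type*} [TopologicalSpace X]
    {V B : Set X} {f : X → ℝ} (hV : IsCompact V) (hB : IsClosed B) (hf : Continuous f)
    (hne : (V ∩ B).Nonempty) (h : sSup (f '' V) = sSup (f '' (V ∩ B))) :
    ∃ x ∈ V ∩ B, IsMaxOn f V x := by
  obtain ⟨x, hx, hfx⟩ := (hV.inter_right hB).exists_sSup_image_eq hne hf.continuousOn
  refine ⟨x, hx, isMaxOn_iff.2 fun v hv => ?_⟩
  rw [← hfx, ← h]
  exact le_csSup (hV.image hf).bddAbove (mem_image_of_mem f hv)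

section HausdorffLimit

variable {X : Type*} [PseudoMetricSpace X] {V : ℕ → Set X} {W : Set X}

theorem exists_tendsto_of_tendsto_hausdorffDist (hV : ∀ j, IsCompact (V j))
    (hne : ∀ j, (V j).Nonempty) (hfin : ∀ j, hausdorffEDist (V j) W ≠ ⊤)
    (hconv : Tendsto (fun j => hausdorffDist (V j) W) atTop (𝓝 0)) {w : X} (hw : w ∈ W) :
    ∃ v : ℕ → X, (∀ j, v j ∈ V j) ∧ Tendsto v atTop (𝓝 w) := by
  choose v hv hdist using fun j => (hV j).exists_infDist_eq_dist (hne j) w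
  refine ⟨v, hv, tendsto_iff_dist_tendsto_zero.2 (squeeze_zero (fun _ => dist_nonneg)
    (fun j => ?_) hconv)⟩
  rw [dist_comm, ← hdist, hausdorffDist_comm]
  exact infDist_le_hausdorffDist_of_mem hw (by rw [hausdorffEDist_comm]; exact hfin j)

theorem mem_of_tendsto_of_tendsto_hausdorffDist (hW : IsClosed W)
    (hfin : ∀ j, hausdorffEDist (V j) W ≠ ⊤)
    (hconv : Tendsto (fun j => hausdorffDist (V j) W) atTop (𝓝 0))
    {x : ℕ → X} (hx : ∀ j, x j ∈ V j) {a : X} (hxa : Tendsto x atTop (𝓝 a)) : a ∈ W := by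
  rw [← hW.closure_eq, Metric.mem_closure_iff]
  intro ε hε
  obtain ⟨j, hj, hdist⟩ := ((hxa.eventually (ball_mem_nhds a (half_pos hε))).and
    (hconv.eventually (gt_mem_nhds (half_pos hε)))).exists
  obtain ⟨b, hb, hxb⟩ := exists_dist_lt_of_hausdorffDist_lt (hx j) hdist (hfin j)
  exact ⟨b, hb, by linarith [dist_triangle a (x j) b, mem_ball'.1 hj]⟩

theorem exists_isMaxOn_of_tendsto_hausdorffDist {K B : Set X} {f : X → ℝ} (hK : IsCompact K)
    (hB : IsClosed B) (hf : Continuous f) (hV : ∀ j, IsCompact (V j)) (hVK : ∀ j, V j ⊆ K)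
    (hmax : ∀ j, ∃ x ∈ V j ∩ B, IsMaxOn f (V j) x) (hW : IsClosed W)
    (hfin : ∀ j, hausdorffEDist (V j) W ≠ ⊤)
    (hconv : Tendsto (fun j => hausdorffDist (V j) W) atTop (𝓝 0)) :
    ∃ a ∈ W ∩ B, IsMaxOn f W a := by
  choose x hxB hxmax using hmax
  have hne : ∀ j, (V j).Nonempty := fun j => ⟨x j, (hxB j).1⟩
  obtain ⟨a, -, φ, hφ, hxa⟩ := hK.tendsto_subseq fun j => hVK j (hxB j).1
  have hconvφ := hconv.comp hφ.tendsto_atTop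
  have haW : a ∈ W := mem_of_tendsto_of_tendsto_hausdorffDist hW (fun k => hfin (φ k)) hconvφ
    (fun k => (hxB (φ k)).1) hxa
  have haB : a ∈ B := hB.mem_of_tendsto hxa (Eventually.of_forall fun k => (hxB (φ k)).2)
  refine ⟨a, ⟨haW, haB⟩, isMaxOn_iff.2 fun w hw => ?_⟩
  obtain ⟨v, hv, hvw⟩ := exists_tendsto_of_tendsto_hausdorffDist (fun k => hV (φ k))
    (fun k => hne (φ k)) (fun k => hfin (φ k)) hconvφ hw
  exact le_of_tendsto_of_tendsto' (hf.tendsto w |>.comp hvw) (hf.tendsto a |>.comp hxa)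
    fun k => isMaxOn_iff.1 (hxmax (φ k)) (v k) (hv k)

end HausdorffLimit

theorem continuous_pev (q : MvPolynomial (Fin 2) ℂ) : Continuous (pev q) :=
  (MvPolynomial.continuous_eval q).comp (by fun_prop)

theorem isCompact_bidisk : IsCompact bidisk := by
  have : bidisk = closedBall (0 : ℂ) 1 ×ˢ closedBall (0 : ℂ) 1 := by
    ext z
    simp [bidisk]
  rw [this]
  exact (isCompact_closedBall _ _).prod (isCompact_closedBall _ _)

theorem polyHull_eq_of_forall_isMaxOn {Y W : Set (ℂ × ℂ)} (hYW : Y ⊆ W)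
    (hmax : ∀ q, ∃ a ∈ Y, IsMaxOn (fun z => ‖pev q z‖) W a) : polyHull Y = polyHull W := by
  refine Subset.antisymm (fun z hz q M hM => hz q M fun y hy => hM y (hYW hy))
    (fun z hz q M hM => hz q M fun y hy => ?_)
  obtain ⟨a, haY, ha⟩ := hmax q
  exact (isMaxOn_iff.1 ha y hy).trans (hM a haY)

theorem inter_nonempty_of_csSup_norm_pev_eq {V B : Set (ℂ × ℂ)} (hne : V.Nonempty)
    (h : sSup ((fun z => ‖pev 1 z‖) '' V) = sSup ((fun z => ‖pev 1 z‖) '' (V ∩ B))) :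
    (V ∩ B).Nonempty := by
  by_contra hempty
  simp [pev, not_nonempty_iff_eq_empty.1 hempty, hne.image_const] at h

/-- Let `(V j)` be a sequence of nonempty compact subsets of `𝔻̄²` such that for every `j`
and every polynomial `p`, `sup_{z ∈ V j} |p z| = sup_{z ∈ V j ∩ ∂𝔻̄²} |p z|`.  Suppose
`V j` converges in the Hausdorff metric to a compact set `W` with `W ∩ ∂𝔻̄²` nonempty.
Then the same sup property holds for `W`; consequently the polynomial hull of
`W ∩ ∂𝔻̄²` equals that of `W`. -/
theorem stmt7 (V : ℕ → Set (ℂ × ℂ))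
    (hne : ∀ j, (V j).Nonempty) (hcpt : ∀ j, IsCompact (V j))
    (hsub : ∀ j, V j ⊆ bidisk)
    (hsup : ∀ j, ∀ q : MvPolynomial (Fin 2) ℂ,
      sSup ((fun z => ‖pev q z‖) '' V j) =
        sSup ((fun z => ‖pev q z‖) '' (V j ∩ frontier bidisk)))
    (W : Set (ℂ × ℂ)) (hW : IsCompact W)
    (hconv : Filter.Tendsto (fun j => Metric.hausdorffDist (V j) W) Filter.atTop (nhds 0))
    (hWb : (W ∩ frontier bidisk).Nonempty) :
    (∀ q : MvPolynomial (Fin 2) ℂ,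
      sSup ((fun z => ‖pev q z‖) '' W) =
        sSup ((fun z => ‖pev q z‖) '' (W ∩ frontier bidisk))) ∧
      polyHull (W ∩ frontier bidisk) = polyHull W := by
  have hWne : W.Nonempty := hWb.mono inter_subset_left
  have hfin : ∀ j, hausdorffEDist (V j) W ≠ ⊤ := fun j =>
    hausdorffEDist_ne_top_of_nonempty_of_bounded (hne j) hWne (hcpt j).isBounded hW.isBounded
  have hmax : ∀ q, ∃ a ∈ W ∩ frontier bidisk, IsMaxOn (fun z => ‖pev q z‖) W a := fun q =>
    exists_isMaxOn_of_tendsto_hausdorffDist isCompact_bidisk isClosed_frontier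
      (continuous_pev q).norm hcpt hsub
      (fun j => (hcpt j).exists_isMaxOn_of_csSup_image_eq isClosed_frontier
        (continuous_pev q).norm (inter_nonempty_of_csSup_norm_pev_eq (hne j) (hsup j 1))
        (hsup j q))
      hW.isClosed hfin hconv
  refine ⟨fun q => ?_, polyHull_eq_of_forall_isMaxOn inter_subset_left hmax⟩
  obtain ⟨a, ha, hamax⟩ := hmax q
  rw [hamax.csSup_image_eq ha.1, (hamax.on_subset inter_subset_left).csSup_image_eq ha]
end

section
/- Let Y be a nonempty compact subset of ℂ² such that P(Y) has dense invertibles and (0,0) lies in the polynomial hull Ŷ. Then for every a ∈ ℂ there exists a point (z,w) ∈ Y with z = a·w. -/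
open BoundedContinuousFunction Set

/-- The subalgebra of `Y →ᵇ ℂ` consisting of restrictions to `Y` of polynomial
functions in the two complex coordinates. -/
noncomputable def polySub (Y : Set (ℂ × ℂ)) : Subalgebra ℂ (Y →ᵇ ℂ) where
  carrier := {f : Y →ᵇ ℂ | ∃ q : MvPolynomial (Fin 2) ℂ, ∀ y : Y, f y = pev q ↑y}
  mul_mem' := by
    rintro f g ⟨q, hq⟩ ⟨r, hr⟩
    exact ⟨q * r, fun y => by simp [pev, hq y, hr y]⟩
  one_mem' := ⟨1, fun y => by simp [pev]⟩
  add_mem' := by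
    rintro f g ⟨q, hq⟩ ⟨r, hr⟩
    exact ⟨q + r, fun y => by simp [pev, hq y, hr y]⟩
  zero_mem' := ⟨0, fun y => by simp [pev]⟩
  algebraMap_mem' := fun c => ⟨MvPolynomial.C c, fun y => by simp [pev]⟩

/-- `P(Y)`: the uniform closure of the polynomial restrictions, as a Banach algebra
(a closed subalgebra of the bounded continuous functions on `Y`). -/
noncomputable def PY (Y : Set (ℂ × ℂ)) : Subalgebra ℂ (Y →ᵇ ℂ) :=
  (polySub Y).topologicalClosure

/-! If `z - a w` had no zero on `Y`, it would be invertible in `C(Y)`, hence in `P(Y)`: a closed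
subalgebra with dense invertibles is inverse-closed, because inversion is continuous at units,
so the inverse of `f` is a limit of inverses of units of the subalgebra approaching `f`. But a
polynomial `q` whose restriction is a unit of `P(Y)` cannot vanish at a point `z` of the hull:
approximating the inverse by a polynomial `r` with `‖q r - 1‖_Y < 1`, the hull inequality
gives `|q(z) r(z) - 1| < 1`. -/

theorem SubringClass.isUnit_of_isUnit_coe {R S : Type*} [NormedRing R] [CompleteSpace R]
    [SetLike S R] [SubringClass S R] {A : S} (hA : IsClosed (A : Set R))
    (hdense : Dense {a : A | IsUnit a}) {a : A} (ha : IsUnit (a : R)) : IsUnit a := by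
  obtain ⟨u, hu⟩ := ha
  have ha_cl : (a : R) ∈ closure (((↑) : A → R) '' {b : A | IsUnit b}) := by
    refine image_closure_subset_closure_image continuous_subtype_val ⟨a, ?_, rfl⟩
    rw [hdense.closure_eq]
    trivial
  have hinv_mem : Ring.inverse (a : R) ∈ A := by
    refine hA.closure_subset (closure_mono ?_
      (mem_closure_image (hu ▸ NormedRing.inverse_continuousAt u) ha_cl))
    rintro _ ⟨_, ⟨_, ⟨v, rfl⟩, rfl⟩, rfl⟩
    rw [show ((v : A) : R) = (Units.map (SubringClass.subtype A : A →* R) v : R) from rfl,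
      Ring.inverse_unit]
    exact (v⁻¹ : Aˣ).1.2
  exact ⟨⟨a, ⟨_, hinv_mem⟩, Subtype.ext (Ring.mul_inverse_cancel _ ⟨u, hu⟩),
    Subtype.ext (Ring.inverse_mul_cancel _ ⟨u, hu⟩)⟩, rfl⟩

theorem BoundedContinuousFunction.isUnit_of_forall_ne_zero {X 𝕜 : Type*} [TopologicalSpace X]
    [CompactSpace X] [NormedField 𝕜] {f : X →ᵇ 𝕜} (hf : ∀ x, f x ≠ 0) : IsUnit f := by
  let g : X →ᵇ 𝕜 := mkOfCompact ⟨fun x => (f x)⁻¹, f.continuous.inv₀ hf⟩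
  refine ⟨⟨f, g, ?_, ?_⟩, rfl⟩ <;> ext x
  · exact mul_inv_cancel₀ (hf x)
  · exact inv_mul_cancel₀ (hf x)

theorem norm_pev_le_of_mem_polyHull {Y : Set (ℂ × ℂ)} {z : ℂ × ℂ} (hz : z ∈ polyHull Y)
    {q : MvPolynomial (Fin 2) ℂ} {f : Y →ᵇ ℂ} (hf : ∀ y : Y, f y = pev q y) :
    ‖pev q z‖ ≤ ‖f‖ :=
  hz q ‖f‖ fun y hy => hf ⟨y, hy⟩ ▸ f.norm_coe_le_norm ⟨y, hy⟩

theorem pev_ne_zero_of_isUnit {Y : Set (ℂ × ℂ)} {z : ℂ × ℂ} (hz : z ∈ polyHull Y)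
    {q : MvPolynomial (Fin 2) ℂ} {f : PY Y} (hf : ∀ y : Y, (f : Y →ᵇ ℂ) y = pev q y)
    (hunit : IsUnit f) : pev q z ≠ 0 := by
  obtain ⟨u, rfl⟩ := hunit
  set g : Y →ᵇ ℂ := (((u⁻¹ : (PY Y)ˣ) : PY Y) : Y →ᵇ ℂ)
  have hfg : (u : Y →ᵇ ℂ) * g = 1 := congrArg Subtype.val u.mul_inv
  obtain ⟨h, ⟨r, hr⟩, hgh⟩ := Metric.mem_closure_iff.mp ((u⁻¹ : (PY Y)ˣ) : PY Y).2
    (‖(u : Y →ᵇ ℂ)‖ + 1)⁻¹ (by positivity)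
  have hclose : ‖(u : Y →ᵇ ℂ) * h - 1‖ < 1 := by
    calc ‖(u : Y →ᵇ ℂ) * h - 1‖ = ‖(u : Y →ᵇ ℂ) * (h - g)‖ := by rw [mul_sub, hfg]
      _ ≤ ‖(u : Y →ᵇ ℂ)‖ * ‖h - g‖ := norm_mul_le _ _
      _ ≤ ‖(u : Y →ᵇ ℂ)‖ * (‖(u : Y →ᵇ ℂ)‖ + 1)⁻¹ := by
          rw [← dist_eq_norm, dist_comm]; gcongr
      _ < 1 := by
          rw [mul_inv_lt_iff₀ (by positivity)]; linarith
  intro hzero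
  have := norm_pev_le_of_mem_polyHull hz (q := q * r - 1) (f := (u : Y →ᵇ ℂ) * h - 1)
    fun y => by simp [pev, hf y, hr y]
  simp only [pev, map_sub, map_mul, map_one] at this hzero
  rw [hzero, zero_mul, zero_sub, norm_neg, norm_one] at this
  linarith

theorem stmt10_general (Y : Set (ℂ × ℂ)) (hcpt : IsCompact Y)
    (hinv : Dense {f : PY Y | IsUnit f})
    (h0 : ((0 : ℂ), (0 : ℂ)) ∈ polyHull Y) :
    ∀ a : ℂ, ∃ y ∈ Y, y.1 = a * y.2 := by
  intro a
  by_contra! hY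
  have : CompactSpace Y := isCompact_iff_compactSpace.mp hcpt
  let q : MvPolynomial (Fin 2) ℂ := .X 0 - .C a * .X 1
  have hq (z : ℂ × ℂ) : pev q z = z.1 - a * z.2 := by simp [pev, q]
  let f : Y →ᵇ ℂ := mkOfCompact ⟨fun y => (y : ℂ × ℂ).1 - a * (y : ℂ × ℂ).2, by fun_prop⟩
  have hf (y : Y) : f y = pev q y := (hq y).symm
  have hf_mem : f ∈ PY Y := (polySub Y).le_topologicalClosure ⟨q, hf⟩
  have hf_unit : IsUnit (⟨f, hf_mem⟩ : PY Y) :=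
    SubringClass.isUnit_of_isUnit_coe (Subalgebra.isClosed_topologicalClosure _) hinv
      (isUnit_of_forall_ne_zero fun y => sub_ne_zero.mpr (hY y y.2))
  exact pev_ne_zero_of_isUnit h0 hf hf_unit (by simp [hq])

/-- Let `Y` be a nonempty compact subset of `ℂ²` such that `P(Y)` has dense invertibles
and `(0,0)` lies in the polynomial hull of `Y`.  Then for every `a ∈ ℂ` there is a point
`(z, w) ∈ Y` with `z = a * w`. -/
theorem stmt10 (Y : Set (ℂ × ℂ)) (hne : Y.Nonempty) (hcpt : IsCompact Y)
    (hinv : Dense {f : PY Y | IsUnit f})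
    (h0 : ((0 : ℂ), (0 : ℂ)) ∈ polyHull Y) :
    ∀ a : ℂ, ∃ y ∈ Y, y.1 = a * y.2 :=
  stmt10_general Y hcpt hinv h0
end

section
/- Let X be a compact Hausdorff space. Then the invertible elements of C(X, ℂ) (the nowhere-vanishing continuous functions) are dense in C(X, ℂ) if and only if for every closed subset E of X and every continuous nowhere-vanishing function f : E → ℂ there exists a continuous nowhere-vanishing function g : X → ℂ whose restriction to E equals f. -/
/-- Let `X` be a compact Hausdorff space.  The invertible elements of `C(X, ℂ)` (the
nowhere-vanishing continuous functions) are dense in `C(X, ℂ)` if and only if for every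
closed `E ⊆ X` and every continuous nowhere-vanishing `f : E → ℂ` there is a continuous
nowhere-vanishing `g : X → ℂ` restricting to `f` on `E`. -/
theorem stmt14 (X : Type*) [TopologicalSpace X] [CompactSpace X] [T2Space X] :
    Dense {f : C(X, ℂ) | IsUnit f} ↔
      ∀ E : Set X, IsClosed E → ∀ f : C(E, ℂ), (∀ e : E, f e ≠ 0) →
        ∃ g : C(X, ℂ), (∀ x : X, g x ≠ 0) ∧ ∀ e : E, g e = f e := by
  constructor
  · -- density ⇒ extension property
    intro hd E hE f hf
    rcases Set.eq_empty_or_nonempty E with hEe | hEne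
    · -- E empty: any unit works
      obtain ⟨u, hu⟩ := hd.nonempty
      refine ⟨u, (ContinuousMap.isUnit_iff_forall_ne_zero u).mp hu, ?_⟩
      rintro ⟨e, he⟩
      simp [hEe] at he
    · -- E nonempty; take the minimum m of ‖f‖ on E
      have hcE : CompactSpace E := isCompact_iff_compactSpace.mp hE.isCompact
      have : Nonempty E := Set.Nonempty.to_subtype hEne
      have hcont : Continuous fun e : E => ‖f e‖ := f.continuous.norm
      obtain ⟨e₀, -, he₀⟩ := isCompact_univ.exists_isMinOn Set.univ_nonempty
        hcont.continuousOn
      set m : ℝ := ‖f e₀‖ with hm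
      have hmpos : 0 < m := norm_pos_iff.mpr (hf e₀)
      have hmle : ∀ e : E, m ≤ ‖f e‖ := fun e =>
        isMinOn_iff.mp he₀ e (Set.mem_univ e)
      -- Tietze extension of f
      obtain ⟨F, hF⟩ := ContinuousMap.exists_restrict_eq hE f
      have hFE : ∀ e : E, F e = f e := fun e => by rw [← hF]; rfl
      -- a unit u within m/2 of F
      obtain ⟨u, huball, hu⟩ := Metric.dense_iff.mp hd F (m / 2) (by positivity)
      rw [Metric.mem_ball] at huball
      have hune : ∀ x : X, u x ≠ 0 := (ContinuousMap.isUnit_iff_forall_ne_zero u).mp hu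
      -- on E, ‖f e / u e - 1‖ < 1
      have hdistE : ∀ e : E, ‖f e - u e‖ < m / 2 := by
        intro e
        have := ContinuousMap.dist_apply_le_dist (f := u) (g := F) (e : X)
        have h2 : dist (u (e : X)) (F (e : X)) < m / 2 := lt_of_le_of_lt this huball
        rw [hFE e] at h2
        rw [← dist_eq_norm, dist_comm]
        exact h2
      have huE : ∀ e : E, m / 2 < ‖u (e : X)‖ := by
        intro e
        have h1 := hmle e
        have h2 := hdistE e
        have h3 := norm_sub_norm_le (f e) (u (e : X))
        linarith
      have hratio : ∀ e : E, ‖f e / u (e : X) - 1‖ < 1 := by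
        intro e
        have hu0 : u (e : X) ≠ 0 := hune e
        have : f e / u (e : X) - 1 = (f e - u (e : X)) / u (e : X) := by
          field_simp
        rw [this, norm_div]
        rw [div_lt_one (lt_trans (by positivity) (huE e))]
        exact lt_trans (hdistE e) (huE e)
      -- log of the ratio, extended by Tietze
      have hslit : ∀ e : E, f e / u (e : X) ∈ Complex.slitPlane := by
        intro e
        have := Complex.mem_slitPlane_of_norm_lt_one (hratio e)
        simpa using this
      have hφcont : Continuous fun e : E => Complex.log (f e / u (e : X)) := by
        apply Continuous.clog
        · exact f.continuous.div (u.continuous.comp continuous_subtype_val)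
            (fun e => hune e)
        · exact hslit
      obtain ⟨Φ, hΦ⟩ := ContinuousMap.exists_restrict_eq hE
        (⟨fun e : E => Complex.log (f e / u (e : X)), hφcont⟩ : C(E, ℂ))
      have hΦE : ∀ e : E, Φ e = Complex.log (f e / u (e : X)) := fun e => by
        have := ContinuousMap.congr_fun hΦ e
        simpa using this
      -- g = u * exp Φ
      refine ⟨⟨fun x => u x * Complex.exp (Φ x),
        u.continuous.mul (Complex.continuous_exp.comp Φ.continuous)⟩, ?_, ?_⟩
      · intro x
        exact mul_ne_zero (hune x) (Complex.exp_ne_zero _)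
      · intro e
        show u (e : X) * Complex.exp (Φ (e : X)) = f e
        rw [hΦE e, Complex.exp_log (div_ne_zero (hf e) (hune e))]
        rw [mul_comm, div_mul_cancel₀ _ (hune (e : X))]
  · -- extension property ⇒ density
    intro hext
    rw [Metric.dense_iff]
    intro F r hr
    set ε : ℝ := r / 3 with hε
    have hεpos : 0 < ε := by positivity
    set E : Set X := {x | ε ≤ ‖F x‖} with hEdef
    have hE : IsClosed E := isClosed_le continuous_const F.continuous.norm
    have hfne : ∀ e : E, (F.restrict E) e ≠ 0 := by
      rintro ⟨e, he⟩
      have : ε ≤ ‖F e‖ := he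
      intro h0
      rw [ContinuousMap.restrict_apply] at h0
      rw [h0] at this
      simp at this
      linarith
    obtain ⟨g, hg0, hgE⟩ := hext E hE (F.restrict E) hfne
    -- k x = max ‖F x‖ ε • (g x / ‖g x‖)
    have hkcont : Continuous fun x : X =>
        ((max ‖F x‖ ε : ℝ) : ℂ) * (g x / (‖g x‖ : ℂ)) := by
      apply Continuous.mul
      · exact Complex.continuous_ofReal.comp (F.continuous.norm.max continuous_const)
      · exact g.continuous.div (Complex.continuous_ofReal.comp g.continuous.norm)
          (fun x => by
            simpa using norm_ne_zero_iff.mpr (hg0 x))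
    set k : C(X, ℂ) := ⟨_, hkcont⟩ with hk
    have hknorm : ∀ x : X, ‖k x‖ = max ‖F x‖ ε := by
      intro x
      have hgx : ‖g x‖ ≠ 0 := norm_ne_zero_iff.mpr (hg0 x)
      have hmax : (0 : ℝ) ≤ max ‖F x‖ ε := le_trans hεpos.le (le_max_right _ _)
      show ‖((max ‖F x‖ ε : ℝ) : ℂ) * (g x / (‖g x‖ : ℂ))‖ = _
      rw [norm_mul, norm_div, Complex.norm_real, Complex.norm_real,
        Real.norm_of_nonneg hmax, Real.norm_of_nonneg (norm_nonneg _),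
        div_self hgx, mul_one]
    refine ⟨k, Metric.mem_ball.mpr ?_, (ContinuousMap.isUnit_iff_forall_ne_zero k).mpr ?_⟩
    · -- dist k F < r
      have hle : dist k F ≤ 2 * ε := by
        rw [ContinuousMap.dist_le (by positivity)]
        intro x
        by_cases hx : x ∈ E
        · -- on E, k x = F x
          have hge : g x = F x := by
            have := hgE ⟨x, hx⟩
            rwa [ContinuousMap.restrict_apply] at this
          have hFx : ε ≤ ‖F x‖ := hx
          have hmax : max ‖F x‖ ε = ‖F x‖ := max_eq_left hFx
          have hkx : k x = F x := by
            show ((max ‖F x‖ ε : ℝ) : ℂ) * (g x / (‖g x‖ : ℂ)) = F x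
            rw [hmax, hge]
            have hFx0 : F x ≠ 0 := fun h => by
              rw [h] at hFx; simp at hFx; linarith
            have : (‖F x‖ : ℂ) ≠ 0 := by
              simpa using norm_ne_zero_iff.mpr hFx0
            rw [mul_comm, div_mul_cancel₀ _ this]
          rw [hkx, dist_self]
          positivity
        · -- off E, ‖F x‖ < ε and ‖k x‖ = ε
          have hFx : ‖F x‖ < ε := lt_of_not_ge hx
          have hkx : ‖k x‖ = ε := by
            rw [hknorm x, max_eq_right hFx.le]
          calc dist (k x) (F x) ≤ ‖k x‖ + ‖F x‖ := by
                rw [dist_eq_norm]; exact norm_sub_le _ _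
            _ ≤ ε + ε := by rw [hkx]; linarith
            _ = 2 * ε := by ring
      calc dist k F ≤ 2 * ε := hle
        _ < r := by rw [hε]; linarith
    · intro x
      intro h0
      have := hknorm x
      rw [h0, norm_zero] at this
      have : ε ≤ 0 := this ▸ le_max_right _ _
      linarith
end
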